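/- Let (X,ℬ,μ,T) be a 1-step Markov shift with finite time-0 generating partition α and c_S^n = 2^{-n}. Then Asc_μ(X,α,T) = (1/2) Σ_{i=1}^∞ 2^{-i} H_μ(α | α_i), where α_i = T^{-i}α and H_μ(·|·) denotes conditional entropy of partitions. -/

import Mathlib

open MeasureTheory Filter Topology

/-- Shannon entropy of the finite partition of `X` given by the fibers of `β`. -/
noncomputable def partEnt {X κ : Type*} [MeasurableSpace X] [Fintype κ]
    (μ : Measure X) (β : X → κ) : ℝ :=
  ∑ c : κ, Real.negMulLog ((μ (β ⁻¹' {c})).toReal)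

/-- The entropy `H_μ(α_S)` of the partition `α_S = ⋁_{i ∈ S} T^{-i} α`. -/
noncomputable def HS {X ι : Type*} [MeasurableSpace X] [Fintype ι]
    (μ : Measure X) (T : X → X) (α : X → ι) (S : Finset ℕ) : ℝ :=
  partEnt μ (fun x => fun i : {i // i ∈ S} => α (T^[(i : ℕ)] x))

/-! The Markov property makes the entropy of the coordinates in `S` grow additively: adding a
coordinate `d` steps beyond `max S` adds `H(α | α_d)`, the entropy of the `d`-step transition
averaged over the stationary law. So `H(α_S)` is `H(α)` plus one term per gap of `S`. Passing
from `{0, …, n - 1}` to `{0, …, n}`, the new coordinate lies in a random `S` with probability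
`1/2`, and then its gap to the previous element of `S` has length `i` with probability `2^{-i}`;
so the averaged entropies increase by `(1/2) Σ_{1 ≤ i ≤ n} 2^{-i} H(α | α_i)` up to `O(2^{-n})`,
and a Cesàro average gives the limit. -/

open Finset Real

section PartitionEntropy

variable {X κ B : Type*} [MeasurableSpace X] [Fintype κ] [Fintype B] {μ : Measure X}

lemma partEnt_comp_of_injective {κ' : Type*} [Fintype κ'] (β : X → κ) {e : κ → κ'}
    (he : Function.Injective e) : partEnt μ (e ∘ β) = partEnt μ β := by
  refine (Fintype.sum_of_injective e he _ _ (fun c' hc' => ?_) fun c => ?_).symm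
  · have : (e ∘ β) ⁻¹' {c'} = ∅ :=
      Set.eq_empty_of_forall_notMem fun x hx => hc' ⟨β x, hx⟩
    simp [this]
  · have : (e ∘ β) ⁻¹' {e c} = β ⁻¹' {c} := by ext x; simp [he.eq_iff]
    rw [this]

/-- The chain rule `H(β ∨ γ) = H(β) + H(γ | β)` when the conditional law of `γ` on `{β = c}` is
`q c`. -/
lemma partEnt_prodMk_eq_add (β : X → κ) (γ : X → B) (q : κ → B → ℝ)
    (hq : ∀ c, ∑ b, q c b = 1)
    (h : ∀ c b, μ.real (β ⁻¹' {c} ∩ γ ⁻¹' {b}) = μ.real (β ⁻¹' {c}) * q c b) :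
    partEnt μ (fun x => (β x, γ x)) =
      partEnt μ β + ∑ c, μ.real (β ⁻¹' {c}) * ∑ b, negMulLog (q c b) := by
  have hfiber : ∀ c b, (fun x => (β x, γ x)) ⁻¹' {(c, b)} = β ⁻¹' {c} ∩ γ ⁻¹' {b} :=
    fun c b => by ext x; simp
  simp only [partEnt, ← measureReal_def, Fintype.sum_prod_type, hfiber, h, negMulLog_mul,
    sum_add_distrib, ← sum_mul, ← mul_sum, hq, one_mul]

lemma sum_measureReal_preimage_mul_comp [IsFiniteMeasure μ] (β : X → κ)
    (hβ : ∀ c, MeasurableSet (β ⁻¹' {c})) (φ : κ → B) (g : B → ℝ) :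
    ∑ c, μ.real (β ⁻¹' {c}) * g (φ c) = ∑ b, μ.real ((φ ∘ β) ⁻¹' {b}) * g b := by
  classical
  have hfiber : ∀ b, (φ ∘ β) ⁻¹' {b} = ⋃ c ∈ univ.filter (φ · = b), β ⁻¹' {c} :=
    fun b => by ext x; simp
  simp_rw [hfiber]
  rw [← sum_fiberwise univ φ]
  refine sum_congr rfl fun b _ => ?_
  rw [measureReal_biUnion_finset _ fun c _ => hβ c, sum_mul]
  · refine sum_congr rfl fun c hc => ?_
    rw [(mem_filter.1 hc).2]
  · exact fun c _ c' _ hcc' => Set.disjoint_left.2 fun x hx hx' => hcc' (hx.symm.trans hx')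

end PartitionEntropy

section PowersetAverage

lemma sum_powerset_range_dite_max' (c : ℝ) (φ : ℕ → ℝ) (n : ℕ) :
    ∑ S ∈ (range n).powerset, (if h : S.Nonempty then φ (S.max' h) else c) =
      c + ∑ m ∈ range n, 2 ^ m * φ m := by
  induction n with
  | zero => simp
  | succ n ih =>
    have hmax : ∀ S ∈ (range n).powerset,
        (if h : (insert n S).Nonempty then φ ((insert n S).max' h) else c) = φ n := by
      intro S hS
      rw [dif_pos (insert_nonempty n S)]
      congr
      exact le_antisymm
        (max'_le _ _ _ fun j hj => (mem_insert.1 hj).elim le_of_eq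
          fun hj => (mem_range.1 (mem_powerset.1 hS hj)).le)
        (le_max' _ _ (mem_insert_self n S))
    rw [range_add_one, sum_powerset_insert notMem_range_self, ih, sum_congr rfl hmax,
      sum_const, card_powerset, card_range, sum_insert notMem_range_self, nsmul_eq_mul]
    push_cast
    ring

variable {F : Finset ℕ → ℝ} {H : ℝ} {G : ℕ → ℝ}

lemma sum_powerset_range_succ_of_increment (h0 : F ∅ = 0) (h1 : ∀ j, F {j} = H)
    (hins : ∀ S m d, S ⊆ range (m + 1) → m ∈ S → 0 < d → F (insert (m + d) S) = F S + G d)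
    (n : ℕ) :
    ∑ S ∈ (range (n + 1)).powerset, F S =
      2 * ∑ S ∈ (range n).powerset, F S + (H + ∑ m ∈ range n, 2 ^ m * G (n - m)) := by
  have hstep : ∀ S ∈ (range n).powerset,
      F (insert n S) = F S + (if h : S.Nonempty then G (n - S.max' h) else H) := by
    intro S hS
    split_ifs with hne
    · have hlt : S.max' hne < n := mem_range.1 (mem_powerset.1 hS (max'_mem S hne))
      have := hins S (S.max' hne) (n - S.max' hne)
        (fun j hj => mem_range_succ_iff.2 (le_max' S j hj)) (max'_mem S hne) (by omega)
      rwa [Nat.add_sub_cancel' hlt.le] at this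
    · rw [not_nonempty_iff_eq_empty.1 hne, h0, zero_add]
      exact h1 n
  have hmax := sum_powerset_range_dite_max' H (fun m => G (n - m)) n
  rw [range_add_one, sum_powerset_insert notMem_range_self, sum_congr rfl hstep,
    sum_add_distrib, hmax]
  ring

lemma inv_two_pow_mul_sum_range_reflect (G : ℕ → ℝ) (n : ℕ) :
    ((2 : ℝ) ^ (n + 1))⁻¹ * ∑ m ∈ range n, 2 ^ m * G (n - m) =
      1 / 2 * ∑ i ∈ range n, ((2 : ℝ) ^ (i + 1))⁻¹ * G (i + 1) := by
  rw [← sum_range_reflect, mul_sum, mul_sum]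
  refine sum_congr rfl fun j hj => ?_
  obtain ⟨k, rfl⟩ := Nat.exists_eq_add_of_lt (mem_range.1 hj)
  rw [show j + k + 1 - 1 - j = k by omega, show j + k + 1 - k = j + 1 by omega]
  field_simp
  ring

lemma inv_two_pow_mul_sum_powerset_range (h0 : F ∅ = 0) (h1 : ∀ j, F {j} = H)
    (hins : ∀ S m d, S ⊆ range (m + 1) → m ∈ S → 0 < d → F (insert (m + d) S) = F S + G d)
    (n : ℕ) :
    ((2 : ℝ) ^ n)⁻¹ * ∑ S ∈ (range n).powerset, F S =
      ∑ k ∈ range n, (((2 : ℝ) ^ (k + 1))⁻¹ * H +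
        1 / 2 * ∑ i ∈ range k, ((2 : ℝ) ^ (i + 1))⁻¹ * G (i + 1)) := by
  induction n with
  | zero => simp [h0]
  | succ n ih =>
    rw [sum_range_succ, ← ih, sum_powerset_range_succ_of_increment h0 h1 hins,
      ← inv_two_pow_mul_sum_range_reflect, pow_succ]
    field_simp

theorem tendsto_powerset_average {C : ℝ} (hG : ∀ d, |G d| ≤ C) (h0 : F ∅ = 0)
    (h1 : ∀ j, F {j} = H)
    (hins : ∀ S m d, S ⊆ range (m + 1) → m ∈ S → 0 < d → F (insert (m + d) S) = F S + G d) :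
    Tendsto (fun n : ℕ => (1 / n : ℝ) * (2 ^ n : ℝ)⁻¹ * ∑ S ∈ (range n).powerset, F S)
      atTop (𝓝 ((1 / 2) * ∑' i : ℕ, (2 ^ (i + 1) : ℝ)⁻¹ * (F {0, i + 1} - F {i + 1}))) := by
  have hpair : ∀ i, F {0, i + 1} - F {i + 1} = G (i + 1) := by
    intro i
    have := hins {0} 0 (i + 1) (by simp) (mem_singleton_self 0) i.succ_pos
    rw [zero_add, ← pair_comm] at this
    rw [this, h1, h1]
    ring
  have hsum : Summable fun i => ((2 : ℝ) ^ (i + 1))⁻¹ * G (i + 1) := by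
    refine Summable.of_norm_bounded
      ((summable_geometric_two.mul_left C).comp_injective (add_left_injective 1)) fun i => ?_
    rw [norm_mul, norm_inv, norm_pow, Real.norm_ofNat, Real.norm_eq_abs, Function.comp_apply,
      one_div, inv_pow, mul_comm C]
    exact mul_le_mul_of_nonneg_left (hG _) (by positivity)
  have hlim : Tendsto (fun k : ℕ => ((2 : ℝ) ^ (k + 1))⁻¹ * H +
      1 / 2 * ∑ i ∈ range k, ((2 : ℝ) ^ (i + 1))⁻¹ * G (i + 1)) atTop
      (𝓝 (0 + 1 / 2 * ∑' i, ((2 : ℝ) ^ (i + 1))⁻¹ * G (i + 1))) := by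
    have hpow : Tendsto (fun k : ℕ => ((2 : ℝ) ^ (k + 1))⁻¹) atTop (𝓝 0) :=
      tendsto_inv_atTop_zero.comp
        ((tendsto_pow_atTop_atTop_of_one_lt one_lt_two).comp (tendsto_add_atTop_nat 1))
    have := (hpow.mul_const H).add (hsum.hasSum.tendsto_sum_nat.const_mul (1 / 2))
    rwa [zero_mul] at this
  have hL : 1 / 2 * ∑' i : ℕ, ((2 : ℝ) ^ (i + 1))⁻¹ * (F {0, i + 1} - F {i + 1}) =
      0 + 1 / 2 * ∑' i, ((2 : ℝ) ^ (i + 1))⁻¹ * G (i + 1) := by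
    simp_rw [hpair, zero_add]
  rw [hL]
  refine hlim.cesaro.congr fun n => ?_
  rw [← inv_two_pow_mul_sum_powerset_range h0 h1 hins, one_div, mul_assoc]

end PowersetAverage

namespace MarkovShift

section Cylinder

variable {A : Type*}

def cyl (S : Finset ℕ) (v : ℕ → A) : Set (ℤ → A) := {x | ∀ j ∈ S, x j = v j}

lemma cyl_congr {S : Finset ℕ} {v w : ℕ → A} (h : ∀ j ∈ S, v j = w j) : cyl S v = cyl S w := by
  ext x
  exact forall₂_congr fun j hj => by rw [h j hj]

lemma cyl_insert (t : ℕ) (S : Finset ℕ) (v : ℕ → A) :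
    cyl (insert t S) v = cyl S v ∩ (fun x : ℤ → A => x t) ⁻¹' {v t} := by
  ext x; simp [cyl, and_comm]

def coords (S : Finset ℕ) (x : ℤ → A) : S → A := fun i => x (i : ℕ)

lemma coords_preimage_singleton {S : Finset ℕ} {c : S → A} {v : ℕ → A}
    (hv : ∀ i : S, v i = c i) : coords S ⁻¹' {c} = cyl S v := by
  ext x
  simp only [Set.mem_preimage, Set.mem_singleton_iff, funext_iff, coords, Subtype.forall]
  exact forall₂_congr fun j hj => by rw [← hv ⟨j, hj⟩]

variable [MeasurableSpace A] [MeasurableSingletonClass A]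

lemma measurableSet_coord_preimage (j : ℤ) (a : A) :
    MeasurableSet ((fun x : ℤ → A => x j) ⁻¹' {a}) :=
  measurable_pi_apply j (measurableSet_singleton a)

lemma measurableSet_coords_preimage (S : Finset ℕ) (c : S → A) :
    MeasurableSet (coords S ⁻¹' {c}) :=
  (measurable_pi_lambda _ fun _ => measurable_pi_apply _) (measurableSet_singleton c)

lemma measure_cyl_eq_sum_insert [Fintype A] (μ : Measure (ℤ → A)) {t : ℕ} {S : Finset ℕ}
    (ht : t ∉ S) (v : ℕ → A) :
    μ (cyl S v) = ∑ a, μ (cyl (insert t S) (Function.update v t a)) := by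
  have hcyl : ∀ a, cyl (insert t S) (Function.update v t a) =
      cyl S v ∩ (fun x : ℤ → A => x t) ⁻¹' {a} := by
    intro a
    rw [cyl_insert, Function.update_self,
      cyl_congr fun j hj => Function.update_of_ne (ne_of_mem_of_not_mem hj ht) a v]
  have hsum := sum_measure_preimage_singleton (μ := μ.restrict (cyl S v)) univ
    fun a _ => measurableSet_coord_preimage (t : ℤ) a
  simp only [coe_univ, Set.preimage_univ, Measure.restrict_apply_univ,
    Measure.restrict_apply (measurableSet_coord_preimage _ _)] at hsum
  simp_rw [hcyl, Set.inter_comm (cyl S v), hsum]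

end Cylinder

section Matrix

variable {A : Type*} [Fintype A]

/-- `H(X₁ | X₀)` for the chain with initial law `p` and transition matrix `Q`. -/
noncomputable def transitionEntropy (p : A → ℝ) (Q : Matrix A A ℝ) : ℝ :=
  ∑ a, p a * ∑ b, negMulLog (Q a b)

variable [DecidableEq A] {P : A → A → ℝ}

lemma of_pow_apply_nonneg (hP0 : ∀ a b, 0 ≤ P a b) (d : ℕ) (a b : A) :
    0 ≤ (Matrix.of P ^ d) a b := by
  induction d generalizing b with
  | zero => rw [pow_zero, Matrix.one_apply]; split_ifs <;> norm_num
  | succ d ih =>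
    rw [pow_succ, Matrix.mul_apply]
    exact sum_nonneg fun c _ => mul_nonneg (ih c) (hP0 c b)

lemma abs_transitionEntropy_le {p : A → ℝ} (hp0 : ∀ a, 0 ≤ p a) (hp1 : ∑ a, p a = 1)
    {Q : Matrix A A ℝ} (hQ : Q ∈ Matrix.rowStochastic ℝ A) :
    |transitionEntropy p Q| ≤ Fintype.card A := by
  have hQ0 : ∀ a b, 0 ≤ Q a b := fun a b => Matrix.nonneg_of_mem_rowStochastic hQ
  have hrow_nonneg : ∀ a, 0 ≤ ∑ b, negMulLog (Q a b) := fun a =>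
    sum_nonneg fun b _ => negMulLog_nonneg (hQ0 a b) (Matrix.le_one_of_mem_rowStochastic hQ)
  have hrow_le : ∀ a, ∑ b, negMulLog (Q a b) ≤ Fintype.card A := fun a =>
    calc ∑ b, negMulLog (Q a b) ≤ ∑ _b : A, (1 : ℝ) := sum_le_sum fun b _ =>
          (negMulLog_le_one_sub_self (hQ0 a b)).trans (sub_le_self 1 (hQ0 a b))
      _ = Fintype.card A := by simp
  rw [transitionEntropy, abs_of_nonneg (sum_nonneg fun a _ => mul_nonneg (hp0 a) (hrow_nonneg a))]
  calc ∑ a, p a * ∑ b, negMulLog (Q a b) ≤ ∑ a, p a * Fintype.card A :=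
        sum_le_sum fun a _ => mul_le_mul_of_nonneg_left (hrow_le a) (hp0 a)
    _ = Fintype.card A := by rw [← sum_mul, hp1, one_mul]

end Matrix

section Markov

variable {A : Type*} [MeasurableSpace A]

def IsMarkovMeasure (P : A → A → ℝ) (p : A → ℝ) (μ : Measure (ℤ → A)) : Prop :=
  ∀ (i : ℤ) (k : ℕ) (w : ℕ → A),
    μ {x | ∀ j : ℕ, j ≤ k → x (i + j) = w j} =
      ENNReal.ofReal (p (w 0) * ∏ j ∈ range k, P (w j) (w (j + 1)))

variable {P : A → A → ℝ} {p : A → ℝ} {μ : Measure (ℤ → A)}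

lemma IsMarkovMeasure.measure_cyl_range (hM : IsMarkovMeasure P p μ) (k : ℕ) (w : ℕ → A) :
    μ (cyl (range (k + 1)) w) =
      ENNReal.ofReal (p (w 0) * ∏ j ∈ range k, P (w j) (w (j + 1))) := by
  rw [← hM 0 k w]
  congr 1
  ext x
  simp [cyl]

lemma IsMarkovMeasure.measure_coord_preimage (hM : IsMarkovMeasure P p μ) (j : ℕ) (a : A) :
    μ ((fun x : ℤ → A => x j) ⁻¹' {a}) = ENNReal.ofReal (p a) := by
  have h := hM j 0 fun _ => a
  rw [prod_range_zero, mul_one] at h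
  rw [← h]
  congr 1
  ext x
  simp

lemma IsMarkovMeasure.measureReal_coord_preimage (hM : IsMarkovMeasure P p μ)
    (hp0 : ∀ a, 0 ≤ p a) (j : ℕ) (a : A) :
    μ.real ((fun x : ℤ → A => x j) ⁻¹' {a}) = p a := by
  rw [measureReal_def, hM.measure_coord_preimage, ENNReal.toReal_ofReal (hp0 a)]

variable [Fintype A] [MeasurableSingletonClass A]

lemma IsMarkovMeasure.measure_cyl_insert_succ (hM : IsMarkovMeasure P p μ)
    (hp0 : ∀ a, 0 ≤ p a) (hP0 : ∀ a b, 0 ≤ P a b) {m : ℕ} {S : Finset ℕ}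
    (hSm : S ⊆ range (m + 1)) (hm : m ∈ S) (v : ℕ → A) :
    μ (cyl (insert (m + 1) S) v) = μ (cyl S v) * ENNReal.ofReal (P (v m) (v (m + 1))) := by
  -- Induct on the gaps `G` of `S` below `m`: without gaps this is the defining product formula,
  -- and each gap coordinate can be summed out on both sides.
  suffices ∀ G ⊆ range m, ∀ v : ℕ → A, μ (cyl (insert (m + 1) (range (m + 1) \ G)) v) =
      μ (cyl (range (m + 1) \ G) v) * ENNReal.ofReal (P (v m) (v (m + 1))) by
    have hG : range (m + 1) \ S ⊆ range m := fun j hj => by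
      obtain ⟨hj, hjS⟩ := mem_sdiff.1 hj
      exact mem_range.2 (lt_of_le_of_ne (mem_range_succ_iff.1 hj) fun h => hjS (h ▸ hm))
    simpa only [Finset.sdiff_sdiff_eq_self hSm] using this _ hG v
  intro G hG
  induction G using Finset.induction_on with
  | empty =>
    intro v
    rw [sdiff_empty, ← range_add_one, hM.measure_cyl_range, hM.measure_cyl_range,
      prod_range_succ, ← mul_assoc, ENNReal.ofReal_mul
        (mul_nonneg (hp0 _) (prod_nonneg fun j _ => hP0 _ _))]
  | insert t G htG ih =>
    intro v
    have ht : t < m := mem_range.1 (hG (mem_insert_self t G))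
    have hinsert : insert t (range (m + 1) \ insert t G) = range (m + 1) \ G := by
      ext j
      grind
    have htS : t ∉ range (m + 1) \ insert t G := by simp
    have htS' : t ∉ insert (m + 1) (range (m + 1) \ insert t G) := by
      simp only [mem_insert, htS, or_false]; omega
    rw [measure_cyl_eq_sum_insert μ htS', measure_cyl_eq_sum_insert μ htS v, sum_mul]
    refine sum_congr rfl fun a _ => ?_
    rw [insert_comm, hinsert, ih ((subset_insert t G).trans hG),
      Function.update_of_ne (by omega), Function.update_of_ne (by omega)]

lemma IsMarkovMeasure.measure_cyl_insert_add [DecidableEq A] (hM : IsMarkovMeasure P p μ)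
    (hp0 : ∀ a, 0 ≤ p a) (hP0 : ∀ a b, 0 ≤ P a b) {m : ℕ} {S : Finset ℕ}
    (hSm : S ⊆ range (m + 1)) (hm : m ∈ S) {d : ℕ} (hd : 0 < d) (v : ℕ → A) :
    μ (cyl (insert (m + d) S) v) =
      μ (cyl S v) * ENNReal.ofReal ((Matrix.of P ^ d) (v m) (v (m + d))) := by
  induction d, hd using Nat.le_induction generalizing v with
  | base => rw [hM.measure_cyl_insert_succ hp0 hP0 hSm hm, pow_one, Matrix.of_apply]
  | succ d hd ih =>
    have hS : ∀ j ∈ S, j < m + d := fun j hj => by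
      have := mem_range.1 (hSm hj); omega
    have hnot : m + d ∉ insert (m + (d + 1)) S := by
      simp only [mem_insert, not_or]
      exact ⟨by omega, fun h => (hS _ h).false⟩
    have hS' : insert (m + d) S ⊆ range (m + d + 1) := by
      intro j hj
      rcases mem_insert.1 hj with rfl | hj
      · exact self_mem_range_succ _
      · exact mem_range.2 ((hS j hj).trans (Nat.lt_succ_self _))
    have hstep : ∀ a,
        μ (cyl (insert (m + d) (insert (m + (d + 1)) S)) (Function.update v (m + d) a)) =
        μ (cyl S v) * (ENNReal.ofReal ((Matrix.of P ^ d) (v m) a) *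
          ENNReal.ofReal (P a (v (m + (d + 1))))) := by
      intro a
      rw [insert_comm, ← add_assoc,
        hM.measure_cyl_insert_succ hp0 hP0 hS' (mem_insert_self _ _), ih,
        cyl_congr fun j hj => Function.update_of_ne (hS j hj).ne a v,
        Function.update_of_ne (by omega), Function.update_self,
        Function.update_of_ne (by omega), mul_assoc]
    rw [measure_cyl_eq_sum_insert μ hnot v]
    simp_rw [hstep]
    rw [← mul_sum,
      ← sum_congr rfl fun a _ => ENNReal.ofReal_mul (of_pow_apply_nonneg hP0 d _ _),
      ← ENNReal.ofReal_sum_of_nonneg fun a _ =>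
        mul_nonneg (of_pow_apply_nonneg hP0 d _ _) (hP0 _ _), pow_succ, Matrix.mul_apply]
    simp only [Matrix.of_apply]

end Markov

section ShiftEntropy

variable {A : Type*} {T : (ℤ → A) → (ℤ → A)}

lemma iterate_apply_of_shift (hT : ∀ x i, T x i = x (i + 1)) (k : ℕ) (x : ℤ → A) (i : ℤ) :
    T^[k] x i = x (i + k) := by
  induction k generalizing x with
  | zero => simp
  | succ k ih => rw [Function.iterate_succ_apply, ih, hT]; push_cast; ring_nf

variable [MeasurableSpace A] [Fintype A] {μ : Measure (ℤ → A)}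

lemma HS_eq_partEnt_coords (hT : ∀ x i, T x i = x (i + 1)) (S : Finset ℕ) :
    HS μ T (fun x => x 0) S = partEnt μ (coords S) := by
  unfold HS coords
  simp only [iterate_apply_of_shift hT, zero_add]

lemma HS_empty [IsProbabilityMeasure μ] (hT : ∀ x i, T x i = x (i + 1)) :
    HS μ T (fun x => x 0) ∅ = 0 := by
  have huniv : ∀ c, coords (∅ : Finset ℕ) ⁻¹' {c} = (Set.univ : Set (ℤ → A)) :=
    fun c => Set.eq_univ_of_forall fun x => Subsingleton.elim _ _
  simp [HS_eq_partEnt_coords hT, partEnt, huniv]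

variable {P : A → A → ℝ} {p : A → ℝ}

lemma HS_singleton (hM : IsMarkovMeasure P p μ) (hp0 : ∀ a, 0 ≤ p a)
    (hT : ∀ x i, T x i = x (i + 1)) (j : ℕ) :
    HS μ T (fun x => x 0) {j} = ∑ a, negMulLog (p a) := by
  have hinj : Function.Injective fun (a : A) (_ : ({j} : Finset ℕ)) => a :=
    fun a b h => congrFun h ⟨j, mem_singleton_self j⟩
  have hcoords :
      coords {j} = (fun a (_ : ({j} : Finset ℕ)) => a) ∘ fun x : ℤ → A => x j := by
    funext x i
    simp [coords, mem_singleton.1 i.2]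
  rw [HS_eq_partEnt_coords hT, hcoords, partEnt_comp_of_injective _ hinj]
  simp [partEnt, ← measureReal_def, hM.measureReal_coord_preimage hp0]

variable [MeasurableSingletonClass A]

lemma HS_insert_add [DecidableEq A] [IsProbabilityMeasure μ] (hM : IsMarkovMeasure P p μ)
    (hp0 : ∀ a, 0 ≤ p a) (hP : Matrix.of P ∈ Matrix.rowStochastic ℝ A)
    (hT : ∀ x i, T x i = x (i + 1)) {m : ℕ} {S : Finset ℕ} (hSm : S ⊆ range (m + 1))
    (hm : m ∈ S) {d : ℕ} (hd : 0 < d) :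
    HS μ T (fun x => x 0) (insert (m + d) S) =
      HS μ T (fun x => x 0) S + transitionEntropy p (Matrix.of P ^ d) := by
  have ht : m + d ∉ S := fun h => by have := mem_range.1 (hSm h); omega
  set e : (S → A) × A → (↥(insert (m + d) S) → A) :=
    fun cb i => if h : (i : ℕ) ∈ S then cb.1 ⟨i, h⟩ else cb.2 with he
  have he_inj : Function.Injective e := by
    intro cb cb' h
    refine Prod.ext (funext fun i => ?_) ?_
    · simpa [he, i.2] using congrFun h ⟨i, mem_insert_of_mem i.2⟩
    · simpa [he, ht] using congrFun h ⟨m + d, mem_insert_self _ _⟩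
  have hcoords : coords (insert (m + d) S) = e ∘ fun x => (coords S x, x ↑(m + d)) := by
    funext x i
    simp only [he, coords, Function.comp_apply]
    split_ifs with h
    · rfl
    · rw [(mem_insert.1 i.2).resolve_right h]
  have hkernel : ∀ c b, μ.real (coords S ⁻¹' {c} ∩ (fun x : ℤ → A => x ↑(m + d)) ⁻¹' {b}) =
      μ.real (coords S ⁻¹' {c}) * (Matrix.of P ^ d) (c ⟨m, hm⟩) b := by
    intro c b
    set v : ℕ → A := fun j => if h : j ∈ S then c ⟨j, h⟩ else b
    have hv : ∀ i : S, v i = c i := fun i => dif_pos i.2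
    have hcyl : coords S ⁻¹' {c} ∩ (fun x : ℤ → A => x ↑(m + d)) ⁻¹' {b} =
        cyl (insert (m + d) S) v := by
      rw [cyl_insert, coords_preimage_singleton hv, show v (m + d) = b from dif_neg ht]
    have hP0 : ∀ a b, 0 ≤ P a b := fun a b => Matrix.nonneg_of_mem_rowStochastic hP
    rw [hcyl, coords_preimage_singleton hv, measureReal_def, measureReal_def,
      hM.measure_cyl_insert_add hp0 hP0 hSm hm hd, ENNReal.toReal_mul,
      ENNReal.toReal_ofReal (of_pow_apply_nonneg hP0 d _ _), hv ⟨m, hm⟩,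
      show v (m + d) = b from dif_neg ht]
  rw [HS_eq_partEnt_coords hT, HS_eq_partEnt_coords hT, hcoords,
    partEnt_comp_of_injective _ he_inj, partEnt_prodMk_eq_add _ _ _
      (fun c => Matrix.sum_row_of_mem_rowStochastic (pow_mem hP d) _) hkernel,
    sum_measureReal_preimage_mul_comp _ (measurableSet_coords_preimage S)
      (fun c => c ⟨m, hm⟩) (fun a => ∑ b, negMulLog ((Matrix.of P ^ d) a b))]
  congr 2 with a
  exact congrArg (· * _) (hM.measureReal_coord_preimage hp0 m a)

end ShiftEntropy

end MarkovShift

theorem markov_ascMu_series_general {A : Type*} [Fintype A] [DecidableEq A]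
    [MeasurableSpace A] [MeasurableSingletonClass A]
    (P : A → A → ℝ) (p : A → ℝ)
    (hP0 : ∀ a b, 0 ≤ P a b) (hProw : ∀ a, ∑ b, P a b = 1)
    (hp0 : ∀ a, 0 ≤ p a) (hp1 : ∑ a, p a = 1)
    (μ : Measure (ℤ → A)) [IsProbabilityMeasure μ]
    (T : (ℤ → A) → (ℤ → A)) (hTdef : ∀ x i, T x i = x (i + 1))
    (hMarkov : ∀ (i : ℤ) (k : ℕ) (w : ℕ → A),
      μ {x | ∀ j : ℕ, j ≤ k → x (i + j) = w j} =
        ENNReal.ofReal (p (w 0) * ∏ j ∈ Finset.range k, P (w j) (w (j + 1)))) :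
    Tendsto (fun n : ℕ =>
        (1 / n : ℝ) * (2 ^ n : ℝ)⁻¹ *
          ∑ S ∈ (Finset.range n).powerset, HS μ T (fun x => x 0) S)
      atTop
      (𝓝 ((1 / 2) * ∑' i : ℕ, (2 ^ (i + 1) : ℝ)⁻¹ *
        (HS μ T (fun x => x 0) {0, i + 1} - HS μ T (fun x => x 0) {i + 1}))) := by
  have hP : Matrix.of P ∈ Matrix.rowStochastic ℝ A :=
    Matrix.mem_rowStochastic_iff_sum.2 ⟨hP0, hProw⟩
  exact tendsto_powerset_average
    (fun d => MarkovShift.abs_transitionEntropy_le hp0 hp1 (pow_mem hP d))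
    (MarkovShift.HS_empty hTdef) (MarkovShift.HS_singleton hMarkov hp0 hTdef)
    fun S m d hSm hm hd => MarkovShift.HS_insert_add hMarkov hp0 hP hTdef hSm hm hd

/-- For a 1-step Markov shift with stochastic matrix `P`, stationary
vector `p`, time-0 generating partition `α` (here `α x = x 0`) and coefficients
`c_S^n = 2^{-n}`, one has
`Asc_μ(X,α,T) = (1/2) Σ_{i=1}^∞ 2^{-i} H_μ(α | α_i)`,
where `H_μ(α | α_i) = H_μ(α ∨ α_i) − H_μ(α_i)`. -/
theorem markov_ascMu_series {A : Type*} [Fintype A] [DecidableEq A]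
    [MeasurableSpace A] [MeasurableSingletonClass A]
    (P : A → A → ℝ) (p : A → ℝ)
    (hP0 : ∀ a b, 0 ≤ P a b) (hProw : ∀ a, ∑ b, P a b = 1)
    (hp0 : ∀ a, 0 ≤ p a) (hp1 : ∑ a, p a = 1)
    (hfix : ∀ b, ∑ a, p a * P a b = p b)
    (μ : Measure (ℤ → A)) [IsProbabilityMeasure μ]
    (T : (ℤ → A) → (ℤ → A)) (hTdef : ∀ x i, T x i = x (i + 1))
    (hTpres : MeasurePreserving T μ μ)
    (hMarkov : ∀ (i : ℤ) (k : ℕ) (w : ℕ → A),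
      μ {x | ∀ j : ℕ, j ≤ k → x (i + j) = w j} =
        ENNReal.ofReal (p (w 0) * ∏ j ∈ Finset.range k, P (w j) (w (j + 1)))) :
    Tendsto (fun n : ℕ =>
        (1 / n : ℝ) * (2 ^ n : ℝ)⁻¹ *
          ∑ S ∈ (Finset.range n).powerset, HS μ T (fun x => x 0) S)
      atTop
      (𝓝 ((1 / 2) * ∑' i : ℕ, (2 ^ (i + 1) : ℝ)⁻¹ *
        (HS μ T (fun x => x 0) {0, i + 1} - HS μ T (fun x => x 0) {i + 1}))) :=
  markov_ascMu_series_general P p hP0 hProw hp0 hp1 μ T hTdef hMarkov
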